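/- arXiv:1401.6937 — 4 statements merged into one kernel-verified Lean document; each statement's English description precedes it below -/
import Mathlib

section
/- If the direct product G₁ × G₂ of two topological abelian groups is s-pure full (every closed subgroup is s-pure), then G₁ and G₂ are both s-pure full. -/
/-!
Pulling a closed subgroup `H ≤ G₁` back along the projection `G₁ × G₂ → G₁` gives the closed
subgroup `H × G₂`, and the projection maps `n`-th multiples into `n`-th multiples. So the density of
`(H × G₂) ∩ n(G₁ × G₂)` in `H × G₂` is carried by the continuous surjection onto the density of
`H ∩ nG₁` in `H`.
-/

section SPure

variable {G K : Type*} [AddGroup G] [TopologicalSpace G] [AddGroup K] [TopologicalSpace K]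

def IsSPure (H : AddSubgroup G) : Prop :=
  ∀ n : ℕ, 0 < n → closure ((H : Set G) ∩ {x | ∃ y, n • y = x}) = H

variable (G) in
def SPureFull : Prop :=
  ∀ H : AddSubgroup G, IsClosed (H : Set G) → IsSPure H

theorem SPureFull.of_surjective {r : K →+ G} (hr : Continuous r)
    (hsurj : Function.Surjective r) (hK : SPureFull K) : SPureFull G := by
  intro H hH n hn
  refine (closure_minimal Set.inter_subset_left hH).antisymm ?_
  have hmultiples : r '' ((H.comap r : Set K) ∩ {x | ∃ y, n • y = x}) ⊆
      (H : Set G) ∩ {x | ∃ y, n • y = x} := by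
    rintro _ ⟨x, ⟨hxH, y, rfl⟩, rfl⟩
    exact ⟨hxH, r y, (map_nsmul r n y).symm⟩
  calc (H : Set G) = r '' (H.comap r : Set K) := (Set.image_preimage_eq _ hsurj).symm
    _ = r '' closure ((H.comap r : Set K) ∩ {x | ∃ y, n • y = x}) := by
      rw [hK (H.comap r) (hH.preimage hr) n hn]
    _ ⊆ closure (r '' ((H.comap r : Set K) ∩ {x | ∃ y, n • y = x})) :=
      image_closure_subset_closure_image hr
    _ ⊆ closure ((H : Set G) ∩ {x | ∃ y, n • y = x}) := closure_mono hmultiples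

end SPure

theorem spure_full_of_prod_spure_full_general
    {G₁ G₂ : Type*} [AddCommGroup G₁] [TopologicalSpace G₁]
    [AddCommGroup G₂] [TopologicalSpace G₂]
    (hfull : ∀ H : AddSubgroup (G₁ × G₂), IsClosed (H : Set (G₁ × G₂)) →
      ∀ n : ℕ, 0 < n →
        closure ((H : Set (G₁ × G₂)) ∩ {x | ∃ y, n • y = x}) = (H : Set (G₁ × G₂))) :
    (∀ H : AddSubgroup G₁, IsClosed (H : Set G₁) → ∀ n : ℕ, 0 < n →
        closure ((H : Set G₁) ∩ {x : G₁ | ∃ y : G₁, n • y = x}) = (H : Set G₁)) ∧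
    (∀ H : AddSubgroup G₂, IsClosed (H : Set G₂) → ∀ n : ℕ, 0 < n →
        closure ((H : Set G₂) ∩ {x : G₂ | ∃ y : G₂, n • y = x}) = (H : Set G₂)) :=
  ⟨SPureFull.of_surjective (r := AddMonoidHom.fst G₁ G₂) continuous_fst Prod.fst_surjective hfull,
    SPureFull.of_surjective (r := AddMonoidHom.snd G₁ G₂) continuous_snd Prod.snd_surjective hfull⟩

/-- If `G₁ × G₂` is s-pure full (every closed subgroup is s-pure), then so are `G₁` and `G₂`. -/
theorem spure_full_of_prod_spure_full
    {G₁ G₂ : Type*} [AddCommGroup G₁] [TopologicalSpace G₁] [IsTopologicalAddGroup G₁] [T2Space G₁]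
    [AddCommGroup G₂] [TopologicalSpace G₂] [IsTopologicalAddGroup G₂] [T2Space G₂]
    (hfull : ∀ H : AddSubgroup (G₁ × G₂), IsClosed (H : Set (G₁ × G₂)) →
      ∀ n : ℕ, 0 < n →
        closure ((H : Set (G₁ × G₂)) ∩ {x | ∃ y, n • y = x}) = (H : Set (G₁ × G₂))) :
    (∀ H : AddSubgroup G₁, IsClosed (H : Set G₁) → ∀ n : ℕ, 0 < n →
        closure ((H : Set G₁) ∩ {x : G₁ | ∃ y : G₁, n • y = x}) = (H : Set G₁)) ∧
    (∀ H : AddSubgroup G₂, IsClosed (H : Set G₂) → ∀ n : ℕ, 0 < n →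
        closure ((H : Set G₂) ∩ {x : G₂ | ∃ y : G₂, n • y = x}) = (H : Set G₂)) :=
  spure_full_of_prod_spure_full_general hfull
end

section
/- A compact Hausdorff abelian group G that is totally disconnected contains no nonzero s-pure subgroup (i.e., G is s-pure simple). -/
/-!
A nonzero `x` in a profinite group lies outside some open subgroup `N`, which has finite index `n`
by compactness. Then `nG ⊆ N`, and since `N` is closed, `H = closure (H ∩ nG) ⊆ N` for every
s-pure `H`; so `x ∉ H`.
-/

namespace AddSubgroup

variable {G : Type*} [AddGroup G] [TopologicalSpace G]

theorem le_of_closure_inter_range_nsmul_index_eq {H N : AddSubgroup G} [N.Normal]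
    (hN : IsClosed (N : Set G))
    (hH : _root_.closure ((H : Set G) ∩ {x | ∃ y, N.index • y = x}) = H) : H ≤ N := by
  rw [← SetLike.coe_subset_coe, ← hH]
  refine closure_minimal ?_ hN
  rintro _ ⟨-, y, rfl⟩
  exact N.nsmul_index_mem y

end AddSubgroup

theorem ProfiniteGrp.exists_openNormalAddSubgroup_notMem {G : Type*} [AddGroup G]
    [TopologicalSpace G] [IsTopologicalAddGroup G] [CompactSpace G] [TotallyDisconnectedSpace G]
    {x : G} (hx : x ≠ 0) : ∃ N : OpenNormalAddSubgroup G, x ∉ N :=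
  (ProfiniteGrp.exist_openNormalAddSubgroup_sub_open_nhds_of_zero isOpen_compl_singleton
    (Set.mem_compl_singleton_iff.mpr hx.symm)).imp fun _ hN hxN => hN hxN rfl

theorem compact_totallyDisconnected_spure_simple_general
    (G : Type*) [AddCommGroup G] [TopologicalSpace G] [IsTopologicalAddGroup G]
    [CompactSpace G] [TotallyDisconnectedSpace G] :
    ∀ H : AddSubgroup G, IsClosed (H : Set G) →
      (∀ n : ℕ, 0 < n →
        closure ((H : Set G) ∩ {x : G | ∃ y : G, n • y = x}) = (H : Set G)) →
      H = ⊥ := by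
  intro H _ hpure
  refine (AddSubgroup.eq_bot_iff_forall H).mpr fun x hxH => ?_
  by_contra hx
  obtain ⟨N, hxN⟩ := ProfiniteGrp.exists_openNormalAddSubgroup_notMem hx
  have hindex : N.toAddSubgroup.index ≠ 0 := AddSubgroup.index_ne_zero_of_finite
  exact hxN (AddSubgroup.le_of_closure_inter_range_nsmul_index_eq N.toOpenAddSubgroup.isClosed
    (hpure _ (Nat.pos_of_ne_zero hindex)) hxH)

/-- A compact Hausdorff totally disconnected abelian group is s-pure simple:
it contains no nonzero s-pure subgroup. -/
theorem compact_totallyDisconnected_spure_simple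
    (G : Type*) [AddCommGroup G] [TopologicalSpace G] [IsTopologicalAddGroup G] [T2Space G]
    [CompactSpace G] [TotallyDisconnectedSpace G] :
    ∀ H : AddSubgroup G, IsClosed (H : Set G) →
      (∀ n : ℕ, 0 < n →
        closure ((H : Set G) ∩ {x : G | ∃ y : G, n • y = x}) = (H : Set G)) →
      H = ⊥ :=
  compact_totallyDisconnected_spure_simple_general G
end

section
/- In the group G of elements (x_ι) ∈ (S¹)^σ with x_ι ∈ {±1} for all but finitely many ι (σ an infinite cardinal), the two-element subgroup H = {1, y} with y_ι = -1 for all ι is closed but not s-pure: for even n, closure(H ∩ G^n) = {1}. -/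
/-!
An even power of a tuple whose coordinates are `±1` off a finite set equals `1` off that finite
set, so for infinite `σ` it is never the constant tuple `y = -1`. Hence `H ∩ Gⁿ = {1}`, a closed
set that misses `y`.
-/

open Filter

section PowersOfSignVectors

variable {σ M : Type*} [Monoid M]

theorem pow_eq_one_of_sq_eq_one {x : M} (hx : x ^ 2 = 1) {n : ℕ} (hn : Even n) : x ^ n = 1 := by
  obtain ⟨k, rfl⟩ := hn
  rw [← two_mul, pow_mul, hx, one_pow]

theorem eventually_pow_eq_one_of_finite {a : M} (ha : a ^ 2 = 1) {w : σ → M}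
    (hw : {ι | w ι ≠ 1 ∧ w ι ≠ a}.Finite) {n : ℕ} (hn : Even n) :
    ∀ᶠ ι in cofinite, (w ^ n) ι = 1 := by
  filter_upwards [hw.compl_mem_cofinite] with ι hι
  have hsq : w ι ^ 2 = 1 := by
    by_cases h1 : w ι = 1
    · rw [h1, one_pow]
    · rwa [not_not.mp fun ha' => hι ⟨h1, ha'⟩]
  exact pow_eq_one_of_sq_eq_one hsq hn

theorem pow_ne_const_of_finite [Infinite σ] {a c : M} (ha : a ^ 2 = 1) (hc : c ≠ 1)
    {w : σ → M} (hw : {ι | w ι ≠ 1 ∧ w ι ≠ a}.Finite) {n : ℕ} (hn : Even n) :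
    w ^ n ≠ fun _ => c := by
  intro h
  obtain ⟨ι, hι⟩ := (eventually_pow_eq_one_of_finite ha hw hn).exists
  exact hc (by rwa [h] at hι)

end PowersOfSignVectors

/-- In the group `G ≤ (S¹)^σ` of tuples equal to `±1` in all but finitely many coordinates
(`σ` infinite), the two-element subgroup `H = {1, y}` with `y ι = -1` for all `ι` is closed
but not s-pure: for every even `n ≥ 1`, `closure (H ∩ Gⁿ) = {1} ≠ H`. -/
theorem subgroup_not_spure_in_circle_power
    (σ : Type*) [Infinite σ] :
    let negOne : Circle := ⟨-1, by simp [Submonoid.unitSphere]⟩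
    let Gs : Set (σ → Circle) := {x | {ι : σ | x ι ≠ 1 ∧ x ι ≠ negOne}.Finite}
    let y : σ → Circle := fun _ => negOne
    let H : Set (σ → Circle) := {1, y}
    IsClosed H ∧
      ∀ n : ℕ, 0 < n → Even n →
        closure (H ∩ {g | ∃ w ∈ Gs, w ^ n = g}) = {1} ∧
        closure (H ∩ {g | ∃ w ∈ Gs, w ^ n = g}) ≠ H := by
  intro negOne Gs y H
  have hneg_ne : negOne ≠ 1 := fun h =>
    absurd (congrArg Subtype.val h : (-1 : ℂ) = 1) (by norm_num)
  have hneg_sq : negOne ^ 2 = 1 := Circle.ext (show (-1 : ℂ) ^ 2 = 1 by norm_num)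
  have hy_ne : y ≠ 1 := Function.const_ne_one.mpr hneg_ne
  refine ⟨H.toFinite.isClosed, fun n _ hn => ?_⟩
  have hsection : H ∩ {g | ∃ w ∈ Gs, w ^ n = g} = {1} := by
    refine Set.eq_singleton_iff_unique_mem.2 ⟨⟨Or.inl rfl, 1, by simp [Gs], one_pow n⟩, ?_⟩
    rintro g ⟨rfl | rfl, w, hw, hwg⟩
    · rfl
    · exact absurd hwg (pow_ne_const_of_finite hneg_sq hneg_ne hw hn)
  rw [hsection, closure_singleton]
  exact ⟨rfl, fun h => hy_ne (Set.mem_singleton_iff.mp (h ▸ Or.inr rfl))⟩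
end

section
/- The discrete group ℚ of rationals is not s-pure projective: for the s-pure exact sequence 0 → ℤ → ℝ → ℝ/ℤ → 0, not every continuous homomorphism ℚ → ℝ/ℤ lifts to a continuous homomorphism ℚ → ℝ. Equivalently, the induced map Hom(ℚ,ℝ) → Hom(ℚ,ℝ/ℤ) is not surjective. -/
/-!
Every homomorphism `g : ℚ → ℝ` is `q ↦ q * g 1`. If `π ∘ g` vanishes on the dyadic
rationals `ℤ[1/2]`, then `g 1 / 2 ^ k` is an integer for every `k`, so `g 1 = 0` and
`π ∘ g = 0`. On the other hand `1/3 ∉ ℤ[1/2]`, and `ℚ/ℤ` (hence `ℝ/ℤ`) separates the points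
of `ℚ ⧸ ℤ[1/2]`, so some `f : ℚ → ℝ/ℤ` vanishes on `ℤ[1/2]` but not at `1/3`; such an `f`
has no lift.
-/

namespace Rat

/-- The subgroup `ℤ[1/n]` of `ℚ`. -/
def denDvdPowAddSubgroup (n : ℕ) : AddSubgroup ℚ where
  carrier := {q | ∃ k : ℕ, q.den ∣ n ^ k}
  zero_mem' := ⟨0, by simp⟩
  add_mem' := by
    rintro a b ⟨k, ha⟩ ⟨l, hb⟩
    exact ⟨k + l, (add_den_dvd a b).trans (pow_add n k l ▸ mul_dvd_mul ha hb)⟩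
  neg_mem' := by
    rintro a ⟨k, ha⟩
    exact ⟨k, by rwa [den_neg_eq_den]⟩

theorem inv_pow_mem_denDvdPowAddSubgroup (n k : ℕ) :
    ((n : ℚ) ^ k)⁻¹ ∈ denDvdPowAddSubgroup n :=
  ⟨k, by rw [← Nat.cast_pow, inv_natCast_den]; split_ifs <;> simp⟩

theorem inv_prime_notMem_denDvdPowAddSubgroup {p n : ℕ} (hp : p.Prime) (hpn : ¬ p ∣ n) :
    (p : ℚ)⁻¹ ∉ denDvdPowAddSubgroup n := by
  rintro ⟨k, hk⟩
  rw [inv_natCast_den_of_pos hp.pos] at hk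
  exact hpn (hp.dvd_of_dvd_pow hk)

end Rat

namespace AddCircle

variable {𝕜 : Type*}

section DivisionRing

variable [DivisionRing 𝕜] [CharZero 𝕜]

noncomputable def ratCastHom : AddCircle (1 : ℚ) →+ AddCircle (1 : 𝕜) :=
  QuotientAddGroup.map _ _ (Rat.castHom 𝕜 : ℚ →+ 𝕜) <| by
    rintro _ ⟨n, rfl⟩
    exact ⟨n, by simp⟩

theorem ratCastHom_injective : Function.Injective (ratCastHom : _ →+ AddCircle (1 : 𝕜)) := by
  refine (injective_iff_map_eq_zero _).mpr fun x hx => ?_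
  induction x using QuotientAddGroup.induction_on with | H q => ?_
  obtain ⟨n, hn⟩ := (coe_eq_zero_iff (p := (1 : 𝕜))).mp hx
  have hnq : (n : 𝕜) = q := by simpa using hn
  exact (coe_eq_zero_iff _).mpr ⟨n, by rw [zsmul_one]; exact_mod_cast hnq⟩

theorem exists_addMonoidHom_le_ker_apply_ne_zero {A : Type*} [AddCommGroup A]
    {H : AddSubgroup A} {a : A} (ha : a ∉ H) :
    ∃ f : A →+ AddCircle (1 : 𝕜), H ≤ f.ker ∧ f a ≠ 0 := by
  obtain ⟨χ, hχ⟩ := CharacterModule.exists_character_apply_ne_zero_of_ne_zero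
    ((QuotientAddGroup.eq_zero_iff a).not.mpr ha)
  refine ⟨ratCastHom.comp ((χ : A ⧸ H →+ AddCircle (1 : ℚ)).comp (QuotientAddGroup.mk' H)),
    fun b hb => ?_, (map_ne_zero_iff _ ratCastHom_injective).mpr hχ⟩
  change ratCastHom (χ (b : A ⧸ H)) = 0
  rw [(QuotientAddGroup.eq_zero_iff b).mpr hb, map_zero, map_zero]

end DivisionRing

variable [Field 𝕜] [LinearOrder 𝕜] [IsStrictOrderedRing 𝕜] [Archimedean 𝕜]

theorem eq_zero_of_forall_coe_div_pow_eq_zero {c : 𝕜} {n : ℕ} (hn : 2 ≤ n)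
    (h : ∀ k : ℕ, ((c / n ^ k : 𝕜) : AddCircle (1 : 𝕜)) = 0) : c = 0 := by
  obtain ⟨k, hk⟩ := pow_unbounded_of_one_lt |c| (by exact_mod_cast hn : (1 : 𝕜) < n)
  obtain ⟨m, hm⟩ := (coe_eq_zero_iff _).mp (h k)
  have hpos : (0 : 𝕜) < n ^ k := by positivity
  have hm_lt : |(m : 𝕜)| < 1 := by
    rw [zsmul_one] at hm
    rwa [hm, abs_div, abs_of_pos hpos, div_lt_one hpos]
  have hm_zero : m = 0 := by
    rw [← Int.cast_abs] at hm_lt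
    exact Int.abs_lt_one_iff.mp (by exact_mod_cast hm_lt)
  simpa [hm_zero, hpos.ne'] using hm.symm

theorem eq_zero_of_forall_mem_denDvdPowAddSubgroup {n : ℕ} (hn : 2 ≤ n) {g : ℚ →+ 𝕜}
    (hg : ∀ q ∈ Rat.denDvdPowAddSubgroup n, ((g q : 𝕜) : AddCircle (1 : 𝕜)) = 0) :
    g = 0 := by
  have hg_apply (q : ℚ) : g q = q * g 1 := by
    have := map_ratCast_smul g ℚ 𝕜 q 1
    rwa [Rat.cast_id, smul_eq_mul, mul_one, smul_eq_mul] at this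
  have hg_one : g 1 = 0 := eq_zero_of_forall_coe_div_pow_eq_zero hn fun k => by
    have := hg _ (Rat.inv_pow_mem_denDvdPowAddSubgroup n k)
    rwa [hg_apply, Rat.cast_inv, Rat.cast_pow, Rat.cast_natCast, ← div_eq_inv_mul] at this
  ext q
  rw [hg_apply, hg_one, mul_zero, AddMonoidHom.zero_apply]

end AddCircle

/-- The discrete group `ℚ` is not s-pure projective: not every homomorphism
`ℚ → ℝ/ℤ` (all of which are continuous, `ℚ` being discrete) lifts through the
quotient map `π : ℝ → ℝ/ℤ` of the s-pure extension `0 → ℤ → ℝ → ℝ/ℤ → 0`. -/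
theorem rat_not_spure_projective :
    ¬ ∀ f : ℚ →+ AddCircle (1 : ℝ), ∃ g : ℚ →+ ℝ,
        ∀ q : ℚ, ((g q : ℝ) : AddCircle (1 : ℝ)) = f q := by
  intro h_lift
  obtain ⟨f, hf_ker, hf_third⟩ :=
    AddCircle.exists_addMonoidHom_le_ker_apply_ne_zero (𝕜 := ℝ)
      (Rat.inv_prime_notMem_denDvdPowAddSubgroup Nat.prime_three (by norm_num : ¬ 3 ∣ 2))
  obtain ⟨g, hg⟩ := h_lift f
  have hg_zero : g = 0 := AddCircle.eq_zero_of_forall_mem_denDvdPowAddSubgroup le_rfl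
    fun q hq => (hg q).trans (hf_ker hq)
  apply hf_third
  rw [← hg, hg_zero, AddMonoidHom.zero_apply, AddCircle.coe_zero]
end
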